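/- Let T, i ≥ 1 be integers and 0 < ξ < 1. Let σ ∈ {L,R}^T be an arbitrary prefix of a pure Markov strategy for Player 2. Consider the first T rounds of the Big Match where Player 1 follows σ1^{i,ξ} and Player 2 follows σ. Let p_win be the probability that Player 1 stops the game (plays R) and wins (Player 2 plays R in the same round), and p_loss the probability that Player 1 stops the game and loses. Then: (1) p_loss ≤ (1−ξ)^i·ξ³ + (1−ξ)^{−1}·p_win; (2) for any 0 < δ ≤ 1/2 and any T > i/(2δ), if dens(σ) ≤ 1/2 − δ then p_win + p_loss ≥ ξ⁴. -/

import Mathlib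

/-! Part (1) is a supermartingale argument. With `f(m) = ξ³(1-ξ)^m` for `m ≥ 0`, continued
linearly with slope `-ξ⁴/(1-ξ⁴)` for `m ≤ 0`, the quantity
`ploss - (1-ξ)⁻¹ pwin + (probability of not having stopped) · f(i + counter)` does not increase
from one round to the next, and it starts at `f(i) = (1-ξ)^i ξ³`.
Part (2): `dens σ T ≤ 1/2 - δ` and `T > i/(2δ)` force `i + counter < 0` after `T` rounds, so
in the last round the level is `≤ 0` and Player 1 stops with probability `ξ⁴`. -/

noncomputable section

namespace Paper

/-- The two actions of each player in the Big Match. -/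
inductive Act
  | L
  | R
deriving DecidableEq

/-- The density of the action `L` in the first `T` terms of the sequence `σ`
of actions of Player 2. -/
def dens (σ : ℕ → Act) (T : ℕ) : ℝ :=
  (((Finset.range T).filter fun t => σ t = Act.L).card : ℝ) / T

/-- The counter used as memory by the base strategy `σ1^{i,ξ}` at round `t`:
the number of earlier rounds in which Player 2 played `L` minus the number of
earlier rounds in which Player 2 played `R`. -/
def counter (σ : ℕ → Act) (t : ℕ) : ℤ :=
  (((Finset.range t).filter fun s => σ s = Act.L).card : ℤ) -
    (((Finset.range t).filter fun s => σ s = Act.R).card : ℤ)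

/-- The probability with which the base strategy `σ1^{i,ξ}` plays `R` (stopping
the game) at round `t` against the fixed sequence `σ`: if the counter equals
`j` then this probability is `ξ⁴ (1-ξ)^(i+j)` when `i + j > 0` and `ξ⁴` when
`i + j ≤ 0`. -/
def qstop (ξ : ℝ) (i : ℕ) (σ : ℕ → Act) (t : ℕ) : ℝ :=
  if 0 < (i : ℤ) + counter σ t then ξ ^ 4 * (1 - ξ) ^ ((i : ℤ) + counter σ t)
  else ξ ^ 4

/-- The probability that, within the first `T` rounds, Player 1 (following
`σ1^{i,ξ}` against the fixed sequence `σ`) stops the game and wins, i.e. stops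
in a round in which Player 2 plays `R`. -/
def pwin (ξ : ℝ) (i : ℕ) (σ : ℕ → Act) (T : ℕ) : ℝ :=
  ∑ t ∈ (Finset.range T).filter (fun t => σ t = Act.R),
    (∏ s ∈ Finset.range t, (1 - qstop ξ i σ s)) * qstop ξ i σ t

/-- The probability that, within the first `T` rounds, Player 1 (following
`σ1^{i,ξ}` against the fixed sequence `σ`) stops the game and loses, i.e. stops
in a round in which Player 2 plays `L`. -/
def ploss (ξ : ℝ) (i : ℕ) (σ : ℕ → Act) (T : ℕ) : ℝ :=
  ∑ t ∈ (Finset.range T).filter (fun t => σ t = Act.L),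
    (∏ s ∈ Finset.range t, (1 - qstop ξ i σ s)) * qstop ξ i σ t



open Finset

section Potential

variable {ξ : ℝ} {m : ℤ}

def stopProb (ξ : ℝ) (m : ℤ) : ℝ :=
  if 0 < m then ξ ^ 4 * (1 - ξ) ^ m else ξ ^ 4

/-- The slope `ξ⁴/(1-ξ⁴)` of the linear part is what makes a round at a level `m ≤ 0` balance:
`(1-ξ⁴) * potential ξ (m-1) = (1-ξ⁴) * potential ξ m + ξ⁴`. -/
def potential (ξ : ℝ) (m : ℤ) : ℝ :=
  if 0 ≤ m then ξ ^ 3 * (1 - ξ) ^ m else ξ ^ 3 - ξ ^ 4 / (1 - ξ ^ 4) * m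

lemma stopProb_of_nonneg (hm : 0 ≤ m) : stopProb ξ m = ξ ^ 4 * (1 - ξ) ^ m := by
  rcases hm.eq_or_lt with rfl | hm
  · simp [stopProb]
  · exact if_pos hm

lemma stopProb_of_nonpos (hm : m ≤ 0) : stopProb ξ m = ξ ^ 4 :=
  if_neg hm.not_gt

lemma potential_of_nonneg (hm : 0 ≤ m) : potential ξ m = ξ ^ 3 * (1 - ξ) ^ m :=
  if_pos hm

lemma potential_of_nonpos (hm : m ≤ 0) :
    potential ξ m = ξ ^ 3 - ξ ^ 4 / (1 - ξ ^ 4) * m := by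
  rcases hm.eq_or_lt with rfl | hm
  · simp [potential]
  · exact if_neg hm.not_ge

lemma stopProb_nonneg (hξ : ξ ≤ 1) (m : ℤ) : 0 ≤ stopProb ξ m := by
  unfold stopProb
  split_ifs
  · exact mul_nonneg (by positivity) (zpow_nonneg (by linarith) _)
  · positivity

variable (hξ0 : 0 ≤ ξ) (hξ1 : ξ < 1)
include hξ0 hξ1

lemma stopProb_le_one (m : ℤ) : stopProb ξ m ≤ 1 := by
  have hξ4 : ξ ^ 4 ≤ 1 := pow_le_one₀ hξ0 hξ1.le
  unfold stopProb
  split_ifs with hm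
  · exact mul_le_one₀ hξ4 (zpow_nonneg (by linarith) _)
      (zpow_le_one₀ (by linarith) (by linarith) hm.le)
  · exact hξ4

lemma pow_four_le_div_one_sub_pow_four : ξ ^ 4 ≤ ξ ^ 4 / (1 - ξ ^ 4) :=
  le_div_self (by positivity) (by nlinarith [pow_lt_one₀ hξ0 hξ1 four_ne_zero])
    (by linarith [pow_nonneg hξ0 4])

lemma one_sub_pow_four_mul_div_cancel : (1 - ξ ^ 4) * (ξ ^ 4 / (1 - ξ ^ 4)) = ξ ^ 4 :=
  mul_div_cancel₀ _ (by nlinarith [pow_lt_one₀ hξ0 hξ1 four_ne_zero])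

lemma potential_nonneg (m : ℤ) : 0 ≤ potential ξ m := by
  rcases le_total 0 m with hm | hm
  · rw [potential_of_nonneg hm]
    exact mul_nonneg (by positivity) (zpow_nonneg (by linarith) _)
  · rw [potential_of_nonpos hm]
    have hslope := (pow_nonneg hξ0 4).trans (pow_four_le_div_one_sub_pow_four hξ0 hξ1)
    nlinarith [pow_nonneg hξ0 3, mul_nonpos_of_nonneg_of_nonpos hslope (Int.cast_nonpos.2 hm)]

lemma stopProb_add_mul_potential_succ_le (m : ℤ) :
    stopProb ξ m + (1 - stopProb ξ m) * potential ξ (m + 1) ≤ potential ξ m := by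
  rcases le_or_gt 0 m with hm | hm
  · rw [stopProb_of_nonneg hm, potential_of_nonneg hm, potential_of_nonneg (by omega),
      zpow_add_one₀ (by linarith)]
    set x := (1 - ξ) ^ m
    have hrem : 0 ≤ ξ ^ 7 * x ^ 2 * (1 - ξ) := mul_nonneg (by positivity) (by linarith)
    linear_combination hrem
  · rw [stopProb_of_nonpos hm.le, potential_of_nonpos hm.le, potential_of_nonpos (by omega)]
    have hm' : (m : ℝ) ≤ -1 := by exact_mod_cast (by omega : m ≤ -1)
    have hgap := mul_nonneg (sub_nonneg.2 (pow_four_le_div_one_sub_pow_four hξ0 hξ1))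
      (by linarith : (0 : ℝ) ≤ -m)
    push_cast
    linear_combination pow_nonneg hξ0 7 + hgap - (m + 1) * one_sub_pow_four_mul_div_cancel hξ0 hξ1

lemma mul_potential_pred_le (m : ℤ) :
    (1 - stopProb ξ m) * potential ξ (m - 1) ≤ potential ξ m + (1 - ξ)⁻¹ * stopProb ξ m := by
  have h1 : (0 : ℝ) < 1 - ξ := by linarith
  rcases le_or_gt m 0 with hm | hm
  · have hpred : potential ξ (m - 1) = potential ξ m + ξ ^ 4 / (1 - ξ ^ 4) := by
      rw [potential_of_nonpos hm, potential_of_nonpos (by omega)]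
      push_cast
      ring
    have hinv : 1 ≤ (1 - ξ)⁻¹ := one_le_inv₀ h1 |>.2 (by linarith)
    rw [stopProb_of_nonpos hm, hpred]
    linear_combination mul_nonneg (pow_nonneg hξ0 4) (potential_nonneg hξ0 hξ1 m) +
      mul_nonneg (sub_nonneg.2 hinv) (pow_nonneg hξ0 4) + one_sub_pow_four_mul_div_cancel hξ0 hξ1
  · obtain ⟨k, rfl⟩ : ∃ k, m = k + 1 := ⟨m - 1, by ring⟩
    rw [stopProb_of_nonneg hm.le, potential_of_nonneg hm.le, potential_of_nonneg (by omega),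
      add_sub_cancel_right, zpow_add_one₀ h1.ne']
    set x := (1 - ξ) ^ k
    have hinv : (1 - ξ)⁻¹ * (ξ ^ 4 * (x * (1 - ξ))) = ξ ^ 4 * x := by field_simp
    rw [hinv]
    linear_combination (mul_nonneg (by positivity) h1.le : 0 ≤ ξ ^ 7 * x ^ 2 * (1 - ξ))

end Potential

section Play

variable {ξ : ℝ} (i : ℕ) (σ : ℕ → Act)

lemma counter_succ (t : ℕ) :
    counter σ (t + 1) = counter σ t + if σ t = Act.L then 1 else -1 := by
  unfold counter
  rw [range_add_one, filter_insert, filter_insert]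
  have hfresh (p : ℕ → Prop) [DecidablePred p] : t ∉ {s ∈ range t | p s} :=
    fun h => notMem_range_self (mem_of_mem_filter t h)
  cases σ t <;> simp [card_insert_of_notMem (hfresh _)] <;> ring

lemma card_filter_L_add_card_filter_R (t : ℕ) :
    #{s ∈ range t | σ s = Act.L} + #{s ∈ range t | σ s = Act.R} = t := by
  have hR : {s ∈ range t | σ s = Act.R} = {s ∈ range t | ¬σ s = Act.L} :=
    filter_congr fun s _ => by cases σ s <;> simp
  rw [hR, card_filter_add_card_filter_not, card_range]

lemma counter_eq_mul_dens {T : ℕ} (hT : T ≠ 0) :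
    (counter σ T : ℝ) = T * (2 * dens σ T - 1) := by
  have hcard : (#{s ∈ range T | σ s = Act.L} : ℝ) + #{s ∈ range T | σ s = Act.R} = T := by
    exact_mod_cast card_filter_L_add_card_filter_R σ T
  rw [counter, dens]
  push_cast
  field_simp
  linarith

lemma add_counter_neg_of_dens_le {T : ℕ} {δ : ℝ} (hδ : 0 < δ) (hiT : (i : ℝ) / (2 * δ) < T)
    (hdens : dens σ T ≤ 1 / 2 - δ) : (i : ℤ) + counter σ T < 0 := by
  have hT : (0 : ℝ) < T := (div_nonneg (Nat.cast_nonneg i) (by positivity)).trans_lt hiT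
  have hi : (i : ℝ) < T * (2 * δ) := (div_lt_iff₀ (by positivity)).1 hiT
  have : (i : ℝ) + counter σ T < 0 := by
    rw [counter_eq_mul_dens σ (by exact_mod_cast hT.ne')]
    nlinarith
  exact_mod_cast this

lemma qstop_eq_stopProb (t : ℕ) : qstop ξ i σ t = stopProb ξ (i + counter σ t) := rfl

def survival (ξ : ℝ) (i : ℕ) (σ : ℕ → Act) (t : ℕ) : ℝ :=
  ∏ s ∈ range t, (1 - qstop ξ i σ s)

lemma survival_succ (t : ℕ) :
    survival ξ i σ (t + 1) = survival ξ i σ t * (1 - qstop ξ i σ t) :=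
  prod_range_succ _ t

lemma pwin_succ (t : ℕ) :
    pwin ξ i σ (t + 1) =
      pwin ξ i σ t + if σ t = Act.R then survival ξ i σ t * qstop ξ i σ t else 0 := by
  rw [pwin, pwin, sum_filter, sum_filter, sum_range_succ, survival]

lemma ploss_succ (t : ℕ) :
    ploss ξ i σ (t + 1) =
      ploss ξ i σ t + if σ t = Act.L then survival ξ i σ t * qstop ξ i σ t else 0 := by
  rw [ploss, ploss, sum_filter, sum_filter, sum_range_succ, survival]

lemma pwin_add_ploss (t : ℕ) : pwin ξ i σ t + ploss ξ i σ t = 1 - survival ξ i σ t := by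
  induction t with
  | zero => simp [pwin, ploss, survival]
  | succ t ih =>
    rw [pwin_succ, ploss_succ, survival_succ]
    cases σ t <;> simp only [reduceCtorEq, if_true, if_false] <;> linear_combination ih

variable (hξ0 : 0 ≤ ξ) (hξ1 : ξ < 1)
include hξ0 hξ1

lemma survival_nonneg (t : ℕ) : 0 ≤ survival ξ i σ t :=
  prod_nonneg fun _ _ => sub_nonneg.2 (stopProb_le_one hξ0 hξ1 _)

lemma survival_le_one (t : ℕ) : survival ξ i σ t ≤ 1 :=
  prod_le_one (fun _ _ => sub_nonneg.2 (stopProb_le_one hξ0 hξ1 _))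
    fun _ _ => sub_le_self _ (stopProb_nonneg hξ1.le _)

lemma qstop_le_pwin_add_ploss_succ (t : ℕ) :
    qstop ξ i σ t ≤ pwin ξ i σ (t + 1) + ploss ξ i σ (t + 1) := by
  rw [pwin_add_ploss, survival_succ]
  have hq : 0 ≤ 1 - qstop ξ i σ t := sub_nonneg.2 (stopProb_le_one hξ0 hξ1 _)
  nlinarith [mul_le_mul_of_nonneg_right (survival_le_one i σ hξ0 hξ1 t) hq]

end Play

def lyapunov (ξ : ℝ) (i : ℕ) (σ : ℕ → Act) (t : ℕ) : ℝ :=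
  ploss ξ i σ t - (1 - ξ)⁻¹ * pwin ξ i σ t + survival ξ i σ t * potential ξ (i + counter σ t)

section Lyapunov

variable {ξ : ℝ} (hξ0 : 0 ≤ ξ) (hξ1 : ξ < 1) (i : ℕ) (σ : ℕ → Act)
include hξ0 hξ1

lemma lyapunov_succ_le (t : ℕ) : lyapunov ξ i σ (t + 1) ≤ lyapunov ξ i σ t := by
  have hP := survival_nonneg i σ hξ0 hξ1 t
  rw [lyapunov, lyapunov, pwin_succ, ploss_succ, survival_succ, counter_succ, qstop_eq_stopProb]
  cases σ t
  · have key := mul_le_mul_of_nonneg_left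
      (stopProb_add_mul_potential_succ_le hξ0 hξ1 (i + counter σ t)) hP
    simp only [if_true, reduceCtorEq, if_false, ← add_assoc]
    linear_combination key
  · have key := mul_le_mul_of_nonneg_left
      (mul_potential_pred_le hξ0 hξ1 (i + counter σ t)) hP
    simp only [if_true, reduceCtorEq, if_false, ← sub_eq_add_neg, ← add_sub_assoc]
    linear_combination key

lemma ploss_le (T : ℕ) :
    ploss ξ i σ T ≤ (1 - ξ) ^ i * ξ ^ 3 + (1 - ξ)⁻¹ * pwin ξ i σ T := by
  have hdecr := antitone_nat_of_succ_le (lyapunov_succ_le hξ0 hξ1 i σ) (Nat.zero_le T)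
  have hstart : lyapunov ξ i σ 0 = (1 - ξ) ^ i * ξ ^ 3 := by
    simp [lyapunov, pwin, ploss, survival, counter, potential, mul_comm]
  have hrest := mul_nonneg (survival_nonneg i σ hξ0 hξ1 T)
    (potential_nonneg hξ0 hξ1 (i + counter σ T))
  rw [lyapunov, hstart] at hdecr
  linarith

end Lyapunov

theorem stmt8_general (T i : ℕ)
    (ξ : ℝ) (hξ0 : 0 < ξ) (hξ1 : ξ < 1) (σ : ℕ → Act) :
    ploss ξ i σ T ≤ (1 - ξ) ^ i * ξ ^ 3 + (1 - ξ)⁻¹ * pwin ξ i σ T ∧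
    ∀ δ : ℝ, 0 < δ → δ ≤ 1 / 2 → (i : ℝ) / (2 * δ) < T →
      dens σ T ≤ 1 / 2 - δ → ξ ^ 4 ≤ pwin ξ i σ T + ploss ξ i σ T := by
  refine ⟨ploss_le hξ0.le hξ1 i σ T, fun δ hδ _ hiT hdens => ?_⟩
  have hlevel := add_counter_neg_of_dens_le i σ hδ hiT hdens
  obtain ⟨t, rfl⟩ : ∃ t, T = t + 1 :=
    Nat.exists_eq_add_one.2 (Nat.pos_of_ne_zero (by rintro rfl; simp [counter] at hlevel; omega))
  have hlast : (i : ℤ) + counter σ t ≤ 0 := by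
    rw [counter_succ] at hlevel
    split_ifs at hlevel <;> omega
  calc ξ ^ 4 = qstop ξ i σ t := (stopProb_of_nonpos hlast).symm
    _ ≤ pwin ξ i σ (t + 1) + ploss ξ i σ (t + 1) := qstop_le_pwin_add_ploss_succ i σ hξ0.le hξ1 t

/-- properties of the base strategy `σ1^{i,ξ}`.  Let `T, i ≥ 1`,
`0 < ξ < 1` and let `σ` be an arbitrary prefix (of length `T`) of a pure Markov
strategy of Player 2 in the Big Match.  Then
(1) `p_loss ≤ (1-ξ)^i ξ³ + (1-ξ)⁻¹ p_win`, and
(2) for any `0 < δ ≤ 1/2` and `T > i/(2δ)`, if `dens σ ≤ 1/2 - δ` then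
`p_win + p_loss ≥ ξ⁴`. -/
theorem stmt8 (T i : ℕ) (hT : 1 ≤ T) (hi : 1 ≤ i)
    (ξ : ℝ) (hξ0 : 0 < ξ) (hξ1 : ξ < 1) (σ : ℕ → Act) :
    ploss ξ i σ T ≤ (1 - ξ) ^ i * ξ ^ 3 + (1 - ξ)⁻¹ * pwin ξ i σ T ∧
    ∀ δ : ℝ, 0 < δ → δ ≤ 1 / 2 → (i : ℝ) / (2 * δ) < T →
      dens σ T ≤ 1 / 2 - δ → ξ ^ 4 ≤ pwin ξ i σ T + ploss ξ i σ T :=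
  stmt8_general T i ξ hξ0 hξ1 σ

end Paper
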